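/- Let A be an n×m real matrix, b ∈ ℝⁿ, s ∈ ℝ^m with all entries positive, and s_gap > 0. Let Ã = [A, −b·1_mᵀ] (an n×2m matrix) and s̃ = (s, s_gap·1_m) ∈ ℝ^{2m}, and assume Ã·S̃^{-2}·Ãᵀ is positive definite, where S̃ = diag(s̃). Then the vector x = (s_gap/m)·S^{-1}1_m, where S = diag(s), satisfies ‖Ax − b‖_{(ÃS̃^{-2}Ãᵀ)^{-1}} = (s_gap/m)·η_{Ã}(s̃). In particular, if η_{Ã}(s̃) = 0 then Ax = b. -/

import Mathlib

open Matrix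

/-- Euclidean norm of a vector. -/
noncomputable def eucNorm {ι : Type*} [Fintype ι] (v : ι → ℝ) : ℝ :=
  Real.sqrt (v ⬝ᵥ v)

/-- The diagonal matrix `S⁻¹` with entries `1 / s i`. -/
noncomputable def diagInv {ι : Type*} [Fintype ι] [DecidableEq ι] (s : ι → ℝ) :
    Matrix ι ι ℝ :=
  Matrix.diagonal fun i => (s i)⁻¹

/-- `x_A(s) = S⁻¹ (1 - S⁻¹ Aᵀ (A S⁻² Aᵀ)⁻¹ A S⁻¹ 1)`. -/
noncomputable def xA {n m : ℕ} (A : Matrix (Fin n) (Fin m) ℝ) (s : Fin m → ℝ) :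
    Fin m → ℝ :=
  (diagInv s *ᵥ fun _ => 1) -
    ((diagInv s * diagInv s * Aᵀ * (A * diagInv s * diagInv s * Aᵀ)⁻¹ * A * diagInv s) *ᵥ
      fun _ => 1)

/-- `η_A(s) = ‖S⁻¹ Aᵀ (A S⁻² Aᵀ)⁻¹ A S⁻¹ 1‖`. -/
noncomputable def etaA {κ ι : Type*} [Fintype κ] [Fintype ι] [DecidableEq κ] [DecidableEq ι]
    (B : Matrix κ ι ℝ) (t : ι → ℝ) : ℝ :=
  eucNorm ((diagInv t * Bᵀ * (B * diagInv t * diagInv t * Bᵀ)⁻¹ * B * diagInv t) *ᵥ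
    fun _ => 1)

/-- The matrix norm `‖v‖_M = √(vᵀ M v)`. -/
noncomputable def mnorm {ι : Type*} [Fintype ι] (M : Matrix ι ι ℝ) (v : ι → ℝ) : ℝ :=
  Real.sqrt (v ⬝ᵥ M *ᵥ v)

/-!
Put `B = Ã S̃⁻¹`, so that `B Bᵀ = Ã S̃⁻² Ãᵀ`. The last `m` columns of `B` all equal `-b / s_gap`,
hence `B 1 = A S⁻¹ 1 - (m / s_gap) b` and `A x - b = (s_gap / m) B 1`. For the orthogonal
projection `P = Bᵀ (B Bᵀ)⁻¹ B` onto the row space of `B` one has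
`‖B v‖²_{(B Bᵀ)⁻¹} = vᵀ P v = ‖P v‖²`, and `η_Ã(s̃) = ‖P 1‖`. Finally `P 1 = 0` forces
`B 1 = B P 1 = 0`.
-/

namespace Matrix

variable {κ ι : Type*} [Fintype κ] [Fintype ι] [DecidableEq κ]

noncomputable def rowSpaceProj (B : Matrix κ ι ℝ) : Matrix ι ι ℝ :=
  Bᵀ * (B * Bᵀ)⁻¹ * B

theorem rowSpaceProj_transpose (B : Matrix κ ι ℝ) : (rowSpaceProj B)ᵀ = rowSpaceProj B := by
  simp only [rowSpaceProj, transpose_mul, transpose_transpose, transpose_nonsing_inv,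
    Matrix.mul_assoc]

theorem mul_rowSpaceProj {B : Matrix κ ι ℝ} (hB : IsUnit (B * Bᵀ).det) :
    B * rowSpaceProj B = B := by
  rw [rowSpaceProj, ← Matrix.mul_assoc, ← Matrix.mul_assoc, mul_nonsing_inv _ hB,
    Matrix.one_mul]

theorem rowSpaceProj_mul_self {B : Matrix κ ι ℝ} (hB : IsUnit (B * Bᵀ).det) :
    rowSpaceProj B * rowSpaceProj B = rowSpaceProj B := by
  conv_lhs => arg 1; rw [rowSpaceProj]
  rw [Matrix.mul_assoc, mul_rowSpaceProj hB, rowSpaceProj]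

theorem dotProduct_rowSpaceProj_mulVec_self {B : Matrix κ ι ℝ} (hB : IsUnit (B * Bᵀ).det)
    (v : ι → ℝ) :
    rowSpaceProj B *ᵥ v ⬝ᵥ rowSpaceProj B *ᵥ v = v ⬝ᵥ rowSpaceProj B *ᵥ v := by
  rw [dotProduct_mulVec, ← mulVec_transpose, rowSpaceProj_transpose, mulVec_mulVec,
    rowSpaceProj_mul_self hB, dotProduct_comm]

theorem dotProduct_inv_mul_transpose_mulVec (B : Matrix κ ι ℝ) (v : ι → ℝ) :
    B *ᵥ v ⬝ᵥ (B * Bᵀ)⁻¹ *ᵥ B *ᵥ v = v ⬝ᵥ rowSpaceProj B *ᵥ v := by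
  rw [rowSpaceProj, ← mulVec_mulVec, ← mulVec_mulVec]
  conv_rhs => rw [dotProduct_mulVec, vecMul_transpose]

theorem mulVec_eq_zero_of_rowSpaceProj_mulVec_eq_zero {B : Matrix κ ι ℝ}
    (hB : IsUnit (B * Bᵀ).det) {v : ι → ℝ} (hv : rowSpaceProj B *ᵥ v = 0) : B *ᵥ v = 0 := by
  rw [← mul_rowSpaceProj hB, ← mulVec_mulVec, hv, mulVec_zero]

end Matrix

theorem eucNorm_eq_zero_iff {ι : Type*} [Fintype ι] {v : ι → ℝ} : eucNorm v = 0 ↔ v = 0 := by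
  have hnonneg : 0 ≤ v ⬝ᵥ v := Finset.sum_nonneg fun i _ => mul_self_nonneg (v i)
  rw [eucNorm, Real.sqrt_eq_zero hnonneg, dotProduct_self_eq_zero]

theorem mnorm_smul {ι : Type*} [Fintype ι] (M : Matrix ι ι ℝ) {c : ℝ} (hc : 0 ≤ c)
    (v : ι → ℝ) : mnorm M (c • v) = c * mnorm M v := by
  rw [mnorm, mnorm, mulVec_smul, dotProduct_smul, smul_dotProduct, smul_eq_mul, smul_eq_mul,
    ← mul_assoc, Real.sqrt_mul (mul_self_nonneg c), Real.sqrt_mul_self hc]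

theorem mnorm_inv_mul_transpose_mulVec {κ ι : Type*} [Fintype κ] [Fintype ι] [DecidableEq κ]
    {B : Matrix κ ι ℝ} (hB : IsUnit (B * Bᵀ).det) (v : ι → ℝ) :
    mnorm (B * Bᵀ)⁻¹ (B *ᵥ v) = eucNorm (rowSpaceProj B *ᵥ v) := by
  rw [mnorm, eucNorm, dotProduct_inv_mul_transpose_mulVec, dotProduct_rowSpaceProj_mulVec_self hB]

section diagInv

variable {κ ι : Type*} [Fintype ι] [DecidableEq ι]

theorem diagInv_transpose (t : ι → ℝ) : (diagInv t)ᵀ = diagInv t :=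
  diagonal_transpose _

theorem mul_diagInv_mul_diagInv_mul_transpose (B : Matrix κ ι ℝ) (t : ι → ℝ) :
    B * diagInv t * diagInv t * Bᵀ = (B * diagInv t) * (B * diagInv t)ᵀ := by
  rw [transpose_mul, diagInv_transpose, Matrix.mul_assoc _ _ Bᵀ]

theorem etaA_eq_eucNorm_rowSpaceProj [Fintype κ] [DecidableEq κ] (B : Matrix κ ι ℝ) (t : ι → ℝ) :
    etaA B t = eucNorm (rowSpaceProj (B * diagInv t) *ᵥ fun _ => 1) := by
  rw [etaA, rowSpaceProj, ← mul_diagInv_mul_diagInv_mul_transpose, transpose_mul,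
    diagInv_transpose]
  simp only [Matrix.mul_assoc]

end diagInv

theorem fromCols_mul_diagInv_mulVec_one {κ ι ι' : Type*} [Fintype ι] [Fintype ι']
    [DecidableEq ι] [DecidableEq ι'] (A : Matrix κ ι ℝ) (b : κ → ℝ) (s : ι → ℝ) (g : ℝ) :
    (fromCols A (of fun i (_ : ι') => -b i) *
      diagInv (ι := ι ⊕ ι') (Sum.elim s fun _ => g)) *ᵥ
        (fun _ => 1) =
      A *ᵥ (fun i => (s i)⁻¹) - ((Fintype.card ι' : ℝ) / g) • b := by
  have hdiag : diagInv (Sum.elim s fun (_ : ι') => g) *ᵥ (fun _ => 1) =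
      Sum.elim (fun i => (s i)⁻¹) fun _ => g⁻¹ := by
    ext (i | i) <;> simp [diagInv, mulVec_diagonal]
  rw [← mulVec_mulVec, hdiag, fromCols_mulVec_sumElim, sub_eq_add_neg]
  congr 1
  ext i
  simp only [mulVec, dotProduct, of_apply, neg_mul, Finset.sum_neg_distrib, Finset.sum_const,
    Finset.card_univ, nsmul_eq_mul, div_eq_mul_inv, Pi.neg_apply, Pi.smul_apply, smul_eq_mul,
    neg_inj]
  ring

theorem isEmpty_of_posDef_mul {κ ι : Type*} [Fintype κ] [Fintype ι] [IsEmpty ι]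
    {B : Matrix κ ι ℝ} {C : Matrix ι κ ℝ} (h : (B * C).PosDef) : IsEmpty κ :=
  ⟨fun i => by simpa [mul_apply] using h.diag_pos (i := i)⟩

theorem primal_from_central_path_general {n m : ℕ} (A : Matrix (Fin n) (Fin m) ℝ)
    (b : Fin n → ℝ) (s : Fin m → ℝ) (sgap : ℝ) (hsgap : 0 < sgap)
    (Atil : Matrix (Fin n) (Fin m ⊕ Fin m) ℝ)
    (hAtil : Atil = Matrix.fromCols A (Matrix.of fun i (_ : Fin m) => -b i))
    (stil : Fin m ⊕ Fin m → ℝ) (hstil : stil = Sum.elim s fun _ => sgap)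
    (hPD : (Atil * diagInv stil * diagInv stil * Atilᵀ).PosDef)
    (x : Fin m → ℝ) (hx : x = fun i => (sgap / m) * (s i)⁻¹) :
    mnorm (Atil * diagInv stil * diagInv stil * Atilᵀ)⁻¹ (A *ᵥ x - b) =
        (sgap / m) * etaA Atil stil ∧
      (etaA Atil stil = 0 → A *ᵥ x = b) := by
  rcases eq_or_ne m 0 with rfl | hm
  · have : IsEmpty (Fin n) := isEmpty_of_posDef_mul (ι := Fin 0 ⊕ Fin 0) hPD
    simp [Subsingleton.elim (A *ᵥ x) b, mnorm]
  have hunit := isUnit_iff_ne_zero.mpr hPD.det_pos.ne'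
  rw [mul_diagInv_mul_diagInv_mul_transpose] at hunit ⊢
  have hres : A *ᵥ x - b = (sgap / m) • ((Atil * diagInv stil) *ᵥ fun _ => 1) := by
    rw [hAtil, hstil, fromCols_mul_diagInv_mulVec_one, Fintype.card_fin, smul_sub, smul_smul,
      div_mul_div_cancel₀ (by positivity), div_self (by positivity), one_smul, ← mulVec_smul, hx]
    rfl
  rw [hres, etaA_eq_eucNorm_rowSpaceProj, mnorm_smul _ (by positivity),
    mnorm_inv_mul_transpose_mulVec hunit, eucNorm_eq_zero_iff]
  refine ⟨rfl, fun hproj => ?_⟩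
  rw [← sub_eq_zero, hres, mulVec_eq_zero_of_rowSpaceProj_mulVec_eq_zero hunit hproj, smul_zero]

/-- For `Ã = [A, -b 1ᵀ]` and `s̃ = (s, s_gap 1)`, the vector `x = (s_gap / m) S⁻¹ 1`
satisfies `‖A x - b‖_{(Ã S̃⁻² Ãᵀ)⁻¹} = (s_gap / m) η_{Ã}(s̃)`; in particular `A x = b`
whenever `η_{Ã}(s̃) = 0`. -/
theorem primal_from_central_path {n m : ℕ} (A : Matrix (Fin n) (Fin m) ℝ)
    (b : Fin n → ℝ) (s : Fin m → ℝ) (hs : ∀ i, 0 < s i) (sgap : ℝ) (hsgap : 0 < sgap)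
    (Atil : Matrix (Fin n) (Fin m ⊕ Fin m) ℝ)
    (hAtil : Atil = Matrix.fromCols A (Matrix.of fun i (_ : Fin m) => -b i))
    (stil : Fin m ⊕ Fin m → ℝ) (hstil : stil = Sum.elim s fun _ => sgap)
    (hPD : (Atil * diagInv stil * diagInv stil * Atilᵀ).PosDef)
    (x : Fin m → ℝ) (hx : x = fun i => (sgap / m) * (s i)⁻¹) :
    mnorm (Atil * diagInv stil * diagInv stil * Atilᵀ)⁻¹ (A *ᵥ x - b) =
        (sgap / m) * etaA Atil stil ∧
      (etaA Atil stil = 0 → A *ᵥ x = b) :=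
  primal_from_central_path_general A b s sgap hsgap Atil hAtil stil hstil hPD x hx
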